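/- Let Σᵢ=(Xᵢ,PC([0,∞),X_{≠i})×𝒰,φ̄ᵢ) be a forward complete control system. Then Σᵢ is UGS if and only if there exist γᵢⱼ,γᵢ∈K∪{0} (j=1,…,n, j≠i) and σᵢ∈K∞ such that for all xᵢ∈Xᵢ, all internal inputs w_{≠i}=(w₁,…,w_{i−1},w_{i+1},…,wₙ)∈PC([0,∞),X_{≠i}), all external inputs u∈𝒰 and all t≥0: ‖φ̄ᵢ(t,xᵢ,(w_{≠i},u))‖_{Xᵢ} ≤ σᵢ(‖xᵢ‖_{Xᵢ}) + Σ_{j≠i} γᵢⱼ(‖wⱼ‖_{[0,t]}) + γᵢ(‖u‖_𝒰). -/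

import Mathlib

open Set Filter

noncomputable section

/-- Class `K` comparison functions: continuous, strictly increasing on `[0,∞)`, vanishing at `0`. -/
def IsClassK (γ : ℝ → ℝ) : Prop :=
  ContinuousOn γ (Set.Ici 0) ∧ StrictMonoOn γ (Set.Ici 0) ∧ γ 0 = 0 ∧ ∀ r ≥ (0:ℝ), 0 ≤ γ r

/-- Class `K∞`: unbounded class `K` functions. -/
def IsClassKinf (γ : ℝ → ℝ) : Prop :=
  IsClassK γ ∧ ∀ M : ℝ, ∃ r ≥ (0:ℝ), M < γ r

/-- Class `K ∪ {0}`. -/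
def IsClassKZero (γ : ℝ → ℝ) : Prop := IsClassK γ ∨ γ = fun _ => 0

/-- Class `K∞ ∪ {0}`. -/
def IsClassKinfZero (γ : ℝ → ℝ) : Prop := IsClassKinf γ ∨ γ = fun _ => 0

/-- Class `L`: continuous, nonincreasing on `[0,∞)`, converging to `0` at infinity. -/
def IsClassL (γ : ℝ → ℝ) : Prop :=
  ContinuousOn γ (Set.Ici 0) ∧ AntitoneOn γ (Set.Ici 0) ∧
    Filter.Tendsto γ Filter.atTop (nhds 0) ∧ ∀ r ≥ (0:ℝ), 0 ≤ γ r

/-- Class `KL` functions. -/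
def IsClassKL (β : ℝ → ℝ → ℝ) : Prop :=
  (∀ t ≥ (0:ℝ), IsClassK (fun r => β r t)) ∧ (∀ r > (0:ℝ), IsClassL (fun t => β r t))

/-- A normed linear space of inputs: a set of functions `[0,∞) → U` (modeled on `ℝ`),
with a norm, satisfying the axioms of shift invariance and concatenation. -/
structure InputSpace (U : Type*) where
  carrier : Set (ℝ → U)
  normU : (ℝ → U) → ℝ
  nonempty : carrier.Nonempty
  normU_nonneg : ∀ u ∈ carrier, 0 ≤ normU u
  shift_mem : ∀ u ∈ carrier, ∀ τ ≥ (0:ℝ), (fun t => u (t + τ)) ∈ carrier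
  shift_norm : ∀ u ∈ carrier, ∀ τ ≥ (0:ℝ), normU (fun t => u (t + τ)) ≤ normU u
  concat_mem : ∀ u₁ ∈ carrier, ∀ u₂ ∈ carrier, ∀ t > (0:ℝ),
    (fun τ => if τ ≤ t then u₁ τ else u₂ (τ - t)) ∈ carrier

/-- Globally bounded, piecewise continuous, right-continuous functions on `[0,∞)`. -/
def PCFun {E : Type*} [NormedAddCommGroup E] (w : ℝ → E) : Prop :=
  (∃ M : ℝ, ∀ t ≥ (0:ℝ), ‖w t‖ ≤ M) ∧
  (∀ t ≥ (0:ℝ), ContinuousWithinAt w (Set.Ici t) t) ∧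
  (∀ T > (0:ℝ), ∃ s : Finset ℝ, ContinuousOn w (Set.Icc 0 T \ (s : Set ℝ)))

/-- Supremum of the norm of `w` over a set of times. -/
noncomputable def supNormOn {E : Type*} [NormedAddCommGroup E] (w : ℝ → E) (s : Set ℝ) : ℝ :=
  sSup ((fun t => ‖w t‖) '' s)

/-- The `i`-th subsystem `Σᵢ = (Xᵢ, PC(ℝ₊, X_{≠i}) × 𝒰, φ̄ᵢ)`: a forward complete control
system whose inputs are pairs of an internal input `w` (a `PC` function with values in the
product of the other state spaces) and an external input `u ∈ 𝒰`. -/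
structure Subsystem {n : ℕ} (X : Fin n → Type*) [∀ j, NormedAddCommGroup (X j)]
    (i : Fin n) {U : Type*} (inp : InputSpace U) where
  flow : ℝ → X i → (∀ j : {j : Fin n // j ≠ i}, ℝ → X j.1) → (ℝ → U) → X i
  identity : ∀ x w u, flow 0 x w u = x
  causality : ∀ t ≥ (0:ℝ), ∀ x : X i,
    ∀ w₁ w₂ : ∀ j : {j : Fin n // j ≠ i}, ℝ → X j.1,
    ∀ u ∈ inp.carrier, ∀ v ∈ inp.carrier,
    (∀ j, ∀ s ∈ Set.Icc 0 t, w₁ j s = w₂ j s) → (∀ s ∈ Set.Icc 0 t, u s = v s) →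
    flow t x w₁ u = flow t x w₂ v
  cont : ∀ x : X i, ∀ w : ∀ j : {j : Fin n // j ≠ i}, ℝ → X j.1, ∀ u ∈ inp.carrier,
    (∀ j, PCFun (w j)) → ContinuousOn (fun t => flow t x w u) (Set.Ici 0)
  cocycle : ∀ x : X i, ∀ w : ∀ j : {j : Fin n // j ≠ i}, ℝ → X j.1, ∀ u ∈ inp.carrier,
    (∀ j, PCFun (w j)) → ∀ t ≥ (0:ℝ), ∀ h ≥ (0:ℝ),
    flow h (flow t x w u) (fun j s => w j (s + t)) (fun s => u (s + t)) = flow (t + h) x w u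

/-- Norm of the combined input `(w, u)` of a subsystem:
`‖(w,u)‖ = √(Σ_{j≠i} ‖wⱼ‖∞² + ‖u‖_𝒰²)`. -/
noncomputable def pairNorm {n : ℕ} {X : Fin n → Type*} [∀ j, NormedAddCommGroup (X j)]
    {i : Fin n} (w : ∀ j : {j : Fin n // j ≠ i}, ℝ → X j.1) (r : ℝ) : ℝ :=
  Real.sqrt ((∑ j : {j : Fin n // j ≠ i}, (supNormOn (w j) (Set.Ici 0)) ^ 2) + r ^ 2)

namespace Subsystem

variable {n : ℕ} {X : Fin n → Type*} [∀ j, NormedAddCommGroup (X j)] {i : Fin n}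
  {U : Type*} {inp : InputSpace U}

/-- Input-to-state stability of the subsystem `Σᵢ`, with respect to the norm of the
whole input `(w, u)`. -/
def ISS (S : Subsystem X i inp) : Prop :=
  ∃ β : ℝ → ℝ → ℝ, ∃ γ : ℝ → ℝ, IsClassKL β ∧ IsClassK γ ∧
    ∀ t ≥ (0:ℝ), ∀ x : X i, ∀ w, (∀ j, PCFun (w j)) → ∀ u ∈ inp.carrier,
      ‖S.flow t x w u‖ ≤ β ‖x‖ t + γ (pairNorm w (inp.normU u))

/-- Uniform global stability of the subsystem `Σᵢ`. -/
def UGS (S : Subsystem X i inp) : Prop :=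
  ∃ σ γ : ℝ → ℝ, IsClassKinf σ ∧ IsClassKinfZero γ ∧
    ∀ t ≥ (0:ℝ), ∀ x : X i, ∀ w, (∀ j, PCFun (w j)) → ∀ u ∈ inp.carrier,
      ‖S.flow t x w u‖ ≤ σ ‖x‖ + γ (pairNorm w (inp.normU u))

/-- The asymptotic gain property of the subsystem `Σᵢ`. -/
def AG (S : Subsystem X i inp) : Prop :=
  ∃ γ : ℝ → ℝ, IsClassKinfZero γ ∧
    ∀ ε > (0:ℝ), ∀ x : X i, ∀ w, (∀ j, PCFun (w j)) → ∀ u ∈ inp.carrier,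
      ∃ τ ≥ (0:ℝ), ∀ t ≥ τ, ‖S.flow t x w u‖ ≤ ε + γ (pairNorm w (inp.normU u))

/-- The bounded input uniform asymptotic gain property of the subsystem `Σᵢ`. -/
def bUAG (S : Subsystem X i inp) : Prop :=
  ∃ γ : ℝ → ℝ, IsClassKinfZero γ ∧
    ∀ ε > (0:ℝ), ∀ r > (0:ℝ), ∃ τ ≥ (0:ℝ),
      ∀ x : X i, ∀ w, (∀ j, PCFun (w j)) → ∀ u ∈ inp.carrier,
        ‖x‖ ≤ r → pairNorm w (inp.normU u) ≤ r →
        ∀ t ≥ τ, ‖S.flow t x w u‖ ≤ ε + γ (pairNorm w (inp.normU u))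

end Subsystem

/-!
UGS gives the summation form: by causality, `φ̄ᵢ(t, x, (w, u))` does not change when every
`wⱼ` is frozen after time `t`, and the frozen input has sup norm `‖wⱼ‖_{[0,t]} =: aⱼ`. The UGS
gain `γ` is evaluated at `√(Σ aⱼ² + ‖u‖²) ≤ Σ aⱼ + ‖u‖`, and since a sum of `N` nonnegative
terms is at most `N` times its largest term, `γ(b₁ + ⋯ + b_N) ≤ γ(N b₁) + ⋯ + γ(N b_N)`.

Conversely, each `‖wⱼ‖_{[0,t]}` and `‖u‖` is at most the norm of the whole input `(w, u)`, so
`r ↦ Σⱼ γᵢⱼ(r) + γᵢ(r) + r` is a UGS gain; the term `r` makes it `K∞` even when all the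
`γ`'s vanish.
-/

section ComparisonFunctions

variable {γ : ℝ → ℝ}

lemma IsClassKZero.monotoneOn (hγ : IsClassKZero γ) : MonotoneOn γ (Ici 0) := by
  rcases hγ with hγ | rfl
  · exact hγ.2.1.monotoneOn
  · exact monotoneOn_const

lemma IsClassKZero.nonneg (hγ : IsClassKZero γ) {r : ℝ} (hr : 0 ≤ r) : 0 ≤ γ r := by
  rcases hγ with hγ | rfl
  · exact hγ.2.2.2 r hr
  · rfl

lemma IsClassKZero.map_zero (hγ : IsClassKZero γ) : γ 0 = 0 := by
  rcases hγ with hγ | rfl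
  · exact hγ.2.2.1
  · rfl

lemma IsClassKZero.continuousOn (hγ : IsClassKZero γ) : ContinuousOn γ (Ici 0) := by
  rcases hγ with hγ | rfl
  · exact hγ.1
  · exact continuousOn_const

lemma IsClassKinfZero.isClassKZero (hγ : IsClassKinfZero γ) : IsClassKZero γ :=
  hγ.imp_left And.left

lemma IsClassK.comp_mul_left (hγ : IsClassK γ) {c : ℝ} (hc : 0 < c) :
    IsClassK fun r => γ (c * r) := by
  have hmaps : MapsTo (c * ·) (Ici 0) (Ici 0) := fun r hr => mul_nonneg hc.le hr
  refine ⟨hγ.1.comp (continuous_const_mul c).continuousOn hmaps, fun p hp q hq hpq => ?_,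
    by simp [hγ.2.2.1], fun r hr => hγ.2.2.2 _ (hmaps hr)⟩
  exact hγ.2.1 (hmaps hp) (hmaps hq) (mul_lt_mul_of_pos_left hpq hc)

lemma IsClassKZero.comp_mul_left (hγ : IsClassKZero γ) {c : ℝ} (hc : 0 < c) :
    IsClassKZero fun r => γ (c * r) := by
  rcases hγ with hγ | rfl
  · exact Or.inl (hγ.comp_mul_left hc)
  · exact Or.inr rfl

lemma isClassKinf_add_id (hcont : ContinuousOn γ (Ici 0)) (hmono : MonotoneOn γ (Ici 0))
    (hzero : γ 0 = 0) : IsClassKinf fun r => γ r + r := by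
  have hnonneg : ∀ r ≥ (0 : ℝ), 0 ≤ γ r := fun r hr => hzero ▸ hmono self_mem_Ici hr hr
  refine ⟨⟨hcont.add continuousOn_id, ?_, by simp [hzero], ?_⟩, ?_⟩
  · intro p hp q hq hpq
    have := hmono hp hq hpq.le
    dsimp only
    linarith
  · intro r hr
    have := hnonneg r hr
    positivity
  · intro M
    refine ⟨|M| + 1, by positivity, ?_⟩
    have := hnonneg (|M| + 1) (by positivity)
    linarith [le_abs_self M]

lemma MonotoneOn.map_sum_le_sum_map_card_mul {ι : Type*} [Fintype ι] [Nonempty ι]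
    (hmono : MonotoneOn γ (Ici 0)) (hnonneg : ∀ r ≥ (0 : ℝ), 0 ≤ γ r)
    {b : ι → ℝ} (hb : ∀ k, 0 ≤ b k) :
    γ (∑ k, b k) ≤ ∑ k, γ (Fintype.card ι * b k) := by
  obtain ⟨k₀, hk₀⟩ := Finite.exists_max b
  have hsum : ∑ k, b k ≤ Fintype.card ι * b k₀ := by
    simpa using Finset.sum_le_card_nsmul Finset.univ b (b k₀) fun k _ => hk₀ k
  calc γ (∑ k, b k) ≤ γ (Fintype.card ι * b k₀) :=
        hmono (Finset.sum_nonneg fun k _ => hb k) (mul_nonneg (Nat.cast_nonneg _) (hb k₀)) hsum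
    _ ≤ ∑ k, γ (Fintype.card ι * b k) :=
        Finset.single_le_sum (f := fun k => γ (Fintype.card ι * b k))
          (fun k _ => hnonneg _ (mul_nonneg (Nat.cast_nonneg _) (hb k))) (Finset.mem_univ k₀)

end ComparisonFunctions

lemma sqrt_sum_sq_le_sum {ι : Type*} (s : Finset ι) {f : ι → ℝ} (hf : ∀ k ∈ s, 0 ≤ f k) :
    √(∑ k ∈ s, f k ^ 2) ≤ ∑ k ∈ s, f k :=
  (Real.sqrt_le_left (Finset.sum_nonneg hf)).2 (Finset.sum_sq_le_sq_sum_of_nonneg hf)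

section PiecewiseContinuous

variable {E : Type*} [NormedAddCommGroup E] {w : ℝ → E} {t : ℝ}

lemma supNormOn_nonneg (w : ℝ → E) (s : Set ℝ) : 0 ≤ supNormOn w s :=
  Real.sSup_nonneg (by rintro _ ⟨a, -, rfl⟩; exact norm_nonneg _)

lemma PCFun.supNormOn_Icc_le (hw : PCFun w) (ht : 0 ≤ t) :
    supNormOn w (Icc 0 t) ≤ supNormOn w (Ici 0) := by
  obtain ⟨M, hM⟩ := hw.1
  refine csSup_le_csSup ⟨M, ?_⟩ ((nonempty_Icc.2 ht).image _) (image_mono Icc_subset_Ici_self)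
  rintro _ ⟨s, hs, rfl⟩
  exact hM s hs

lemma image_min_Ici_zero (ht : 0 ≤ t) : (min · t) '' Ici 0 = Icc 0 t := by
  ext s
  constructor
  · rintro ⟨s, hs, rfl⟩
    exact ⟨le_min hs ht, min_le_right s t⟩
  · rintro ⟨hs₀, hst⟩
    exact ⟨s, hs₀, min_eq_left hst⟩

lemma supNormOn_comp_min (ht : 0 ≤ t) :
    supNormOn (fun s => w (min s t)) (Ici 0) = supNormOn w (Icc 0 t) := by
  rw [supNormOn, supNormOn, ← image_min_Ici_zero ht, image_image]

lemma PCFun.comp_min (hw : PCFun w) (ht : 0 ≤ t) : PCFun fun s => w (min s t) := by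
  obtain ⟨⟨M, hM⟩, hright, hpiece⟩ := hw
  refine ⟨⟨M, fun s hs => hM _ (le_min hs ht)⟩, fun s hs => ?_, fun T hT => ?_⟩
  · exact (hright _ (le_min hs ht)).comp (f := fun y => min y t)
      (continuous_id.min continuous_const).continuousWithinAt fun y hy => min_le_min_right t hy
  · obtain ⟨F, hF⟩ := hpiece T hT
    refine ⟨insert t F, fun s hs => ?_⟩
    have hsF : s ∉ (F : Set ℝ) := fun h => hs.2 (Finset.mem_insert_of_mem h)
    have hst : s ≠ t := fun h => hs.2 (h ▸ Finset.mem_insert_self t F)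
    have hsub : Icc 0 T \ (insert t F : Finset ℝ) ⊆ Icc 0 T \ (F : Set ℝ) :=
      sdiff_subset_sdiff_right (Finset.coe_subset.2 (Finset.subset_insert t F))
    rcases hst.lt_or_gt with hlt | hgt
    · refine ((hF s ⟨hs.1, hsF⟩).mono hsub).congr_of_eventuallyEq ?_ (by rw [min_eq_left hlt.le])
      filter_upwards [mem_nhdsWithin_of_mem_nhds (Iio_mem_nhds hlt)] with y hy
      rw [min_eq_left (le_of_lt hy)]
    · refine continuousWithinAt_const.congr_of_eventuallyEq ?_ (by rw [min_eq_right hgt.le])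
      filter_upwards [mem_nhdsWithin_of_mem_nhds (Ioi_mem_nhds hgt)] with y hy
      rw [min_eq_right (le_of_lt hy)]

end PiecewiseContinuous

section PairNorm

variable {n : ℕ} {X : Fin n → Type*} [∀ j, NormedAddCommGroup (X j)] {i : Fin n}
  (w : ∀ j : {j : Fin n // j ≠ i}, ℝ → X j.1)

lemma supNormOn_le_pairNorm (r : ℝ) (j : {j : Fin n // j ≠ i}) :
    supNormOn (w j) (Ici 0) ≤ pairNorm w r := by
  refine (le_abs_self _).trans (Real.abs_le_sqrt ?_)
  have := Finset.single_le_sum (f := fun k => supNormOn (w k) (Ici 0) ^ 2)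
    (fun k _ => sq_nonneg _) (Finset.mem_univ j)
  nlinarith [sq_nonneg r]

lemma le_pairNorm (r : ℝ) : r ≤ pairNorm w r := by
  refine (le_abs_self _).trans (Real.abs_le_sqrt ?_)
  have := Finset.sum_nonneg fun k (_ : k ∈ Finset.univ) => sq_nonneg (supNormOn (w k) (Ici 0))
  linarith

lemma pairNorm_le_sum_add {r : ℝ} (hr : 0 ≤ r) :
    pairNorm w r ≤ ∑ j, supNormOn (w j) (Ici 0) + r := by
  have key := sqrt_sum_sq_le_sum Finset.univ
    (f := fun o : Option {j : Fin n // j ≠ i} => o.elim r fun j => supNormOn (w j) (Ici 0))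
    (by rintro (_ | j) -; exacts [hr, supNormOn_nonneg _ _])
  simpa [pairNorm, Fintype.sum_option, add_comm] using key

end PairNorm

namespace Subsystem

variable {n : ℕ} {X : Fin n → Type*} [∀ j, NormedAddCommGroup (X j)] {i : Fin n}
  {U : Type*} {inp : InputSpace U}

def UGSSummation (S : Subsystem X i inp) : Prop :=
  ∃ σ : ℝ → ℝ, ∃ γmat : {j : Fin n // j ≠ i} → ℝ → ℝ, ∃ γe : ℝ → ℝ,
    IsClassKinf σ ∧ (∀ j, IsClassKZero (γmat j)) ∧ IsClassKZero γe ∧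
    ∀ x : X i, ∀ w, (∀ j, PCFun (w j)) → ∀ u ∈ inp.carrier, ∀ t ≥ (0:ℝ),
      ‖S.flow t x w u‖ ≤ σ ‖x‖
        + (∑ j : {j : Fin n // j ≠ i}, γmat j (supNormOn (w j) (Set.Icc 0 t)))
        + γe (inp.normU u)

lemma flow_comp_min (S : Subsystem X i inp) {t : ℝ} (ht : 0 ≤ t) (x : X i)
    (w : ∀ j : {j : Fin n // j ≠ i}, ℝ → X j.1) {u : ℝ → U} (hu : u ∈ inp.carrier) :
    S.flow t x (fun j s => w j (min s t)) u = S.flow t x w u :=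
  S.causality t ht x _ w u hu u hu (fun j s hs => by rw [min_eq_left hs.2]) fun _ _ => rfl

theorem UGS.ugsSummation {S : Subsystem X i inp} (h : S.UGS) : S.UGSSummation := by
  obtain ⟨σ, γ, hσ, hγ, hest⟩ := h
  have hγ' := hγ.isClassKZero
  set m : ℝ := (Fintype.card (Option {j : Fin n // j ≠ i}) : ℝ)
  have hm : 0 < m := Nat.cast_pos.2 Fintype.card_pos
  refine ⟨σ, fun _ r => γ (m * r), fun r => γ (m * r), hσ, fun _ => hγ'.comp_mul_left hm,
    hγ'.comp_mul_left hm, fun x w hw u hu t ht => ?_⟩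
  set a := fun j => supNormOn (w j) (Icc 0 t)
  have hr := inp.normU_nonneg u hu
  have hpair : pairNorm (fun j s => w j (min s t)) (inp.normU u) ≤ ∑ j, a j + inp.normU u := by
    simpa only [supNormOn_comp_min ht] using pairNorm_le_sum_add (fun j s => w j (min s t)) hr
  have hsplit : γ (∑ j, a j + inp.normU u) ≤ ∑ j, γ (m * a j) + γ (m * inp.normU u) := by
    have := hγ'.monotoneOn.map_sum_le_sum_map_card_mul (fun r hr => hγ'.nonneg hr)
      (b := fun o : Option {j : Fin n // j ≠ i} => o.elim (inp.normU u) a)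
      (by rintro (_ | j); exacts [hr, supNormOn_nonneg _ _])
    simpa only [Fintype.sum_option, Option.elim, add_comm] using this
  calc ‖S.flow t x w u‖ = ‖S.flow t x (fun j s => w j (min s t)) u‖ := by
        rw [S.flow_comp_min ht x w hu]
    _ ≤ σ ‖x‖ + γ (pairNorm (fun j s => w j (min s t)) (inp.normU u)) :=
        hest t ht x _ (fun j => (hw j).comp_min ht) u hu
    _ ≤ σ ‖x‖ + γ (∑ j, a j + inp.normU u) := by
        gcongr
        exact hγ'.monotoneOn (Real.sqrt_nonneg _)
          (add_nonneg (Finset.sum_nonneg fun j _ => supNormOn_nonneg _ _) hr) hpair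
    _ ≤ σ ‖x‖ + ∑ j, γ (m * a j) + γ (m * inp.normU u) := by linarith

theorem UGSSummation.ugs {S : Subsystem X i inp} (h : S.UGSSummation) : S.UGS := by
  obtain ⟨σ, γmat, γe, hσ, hmat, he, hest⟩ := h
  set g : ℝ → ℝ := fun r => ∑ j, γmat j r + γe r
  have hg_mono : MonotoneOn g (Ici 0) := fun p hp q hq hpq =>
    add_le_add (Finset.sum_le_sum fun j _ => (hmat j).monotoneOn hp hq hpq)
      (he.monotoneOn hp hq hpq)
  have hg : IsClassKinf fun r => g r + r :=
    isClassKinf_add_id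
      ((continuousOn_finsetSum _ fun j _ => (hmat j).continuousOn).add he.continuousOn)
      hg_mono (by simp [g, (hmat _).map_zero, he.map_zero])
  refine ⟨σ, _, hσ, Or.inl hg, fun t ht x w hw u hu => ?_⟩
  set P := pairNorm w (inp.normU u)
  have hr := inp.normU_nonneg u hu
  have hP : 0 ≤ P := Real.sqrt_nonneg _
  have hwP : ∑ j, γmat j (supNormOn (w j) (Icc 0 t)) ≤ ∑ j, γmat j P :=
    Finset.sum_le_sum fun j _ => (hmat j).monotoneOn (supNormOn_nonneg _ _) hP <|
      ((hw j).supNormOn_Icc_le ht).trans (supNormOn_le_pairNorm w _ j)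
  have huP : γe (inp.normU u) ≤ γe P := he.monotoneOn hr hP (le_pairNorm w _)
  have := hest x w hw u hu t ht
  simp only [g]
  linarith

end Subsystem

/-- A forward complete subsystem `Σᵢ` is UGS if and only if it satisfies a
UGS estimate in summation formulation with gains `γᵢⱼ, γᵢ ∈ K ∪ {0}` and `σᵢ ∈ K∞`. -/
theorem subsystem_ugs_iff_summation_formulation
    {n : ℕ} {X : Fin n → Type*} [∀ j, NormedAddCommGroup (X j)] {i : Fin n}
    {U : Type*} {inp : InputSpace U} (S : Subsystem X i inp) :
    S.UGS ↔
      ∃ σ : ℝ → ℝ, ∃ γmat : {j : Fin n // j ≠ i} → ℝ → ℝ, ∃ γe : ℝ → ℝ,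
        IsClassKinf σ ∧ (∀ j, IsClassKZero (γmat j)) ∧ IsClassKZero γe ∧
        ∀ x : X i, ∀ w, (∀ j, PCFun (w j)) → ∀ u ∈ inp.carrier, ∀ t ≥ (0:ℝ),
          ‖S.flow t x w u‖ ≤ σ ‖x‖
            + (∑ j : {j : Fin n // j ≠ i}, γmat j (supNormOn (w j) (Set.Icc 0 t)))
            + γe (inp.normU u) :=
  ⟨Subsystem.UGS.ugsSummation, Subsystem.UGSSummation.ugs⟩
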